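/- For g ∈ SL(2,ℂ) with Iwasawa decomposition g = n·a(t₀)·k where k = [[α,β],[−conj(β),conj(α)]] ∈ SU(2), and for z ∈ ℂ, t ∈ ℝ, the Iwasawa A-projection satisfies A(g·n(z)·a(t)) = t₀ + t − log(|α|² + |β|²(|z|² + e^{2t}) − α·conj(β)·z − conj(α)·β·conj(z)). In particular, ∂/∂x A(g·n(x))|_{x=0} = α·conj(β) + conj(α)·β for real x, and ∂/∂t A(g·a(t))|_{t=0} = |α|² − |β|². -/

import Mathlib

noncomputable section

def Nc (z : ℂ) : Matrix (Fin 2) (Fin 2) ℂ := !![1, z; 0, 1]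

def Ac (t : ℝ) : Matrix (Fin 2) (Fin 2) ℂ :=
  !![(Real.exp (t/2) : ℂ), 0; 0, (Real.exp (-(t/2)) : ℂ)]

/-- The Iwasawa A-projection of `g ∈ SL(2,ℂ)`: `A(g) = −log(|c|² + |d|²)`. -/
def IwaA (g : Matrix (Fin 2) (Fin 2) ℂ) : ℝ :=
  -Real.log (Complex.normSq (g 1 0) + Complex.normSq (g 1 1))

/-- If `g = n·a(t₀)·k` with `k = [[α,β],[−conj β, conj α]] ∈ SU(2)`, then
`A(g·n(z)·a(t)) = t₀ + t − log(|α|² + |β|²(|z|² + e^{2t}) − α conj(β) z − conj(α) β conj(z))`;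
in particular `∂/∂x A(g·n(x))|₀ = α conj(β) + conj(α) β` and
`∂/∂t A(g·a(t))|₀ = |α|² − |β|²`. -/
theorem stmt_10 (g : Matrix (Fin 2) (Fin 2) ℂ) (z₀ : ℂ) (t₀ : ℝ) (α β : ℂ)
    (hαβ : Complex.normSq α + Complex.normSq β = 1)
    (hg : g = Nc z₀ * Ac t₀ * !![α, β; -star β, star α]) :
    (∀ z : ℂ, ∀ t : ℝ, IwaA (g * Nc z * Ac t) =
      t₀ + t - Real.log (Complex.normSq α
        + Complex.normSq β * (Complex.normSq z + Real.exp (2*t))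
        - (α * star β * z + star α * β * star z).re)) ∧
    HasDerivAt (fun x : ℝ => IwaA (g * Nc (x : ℂ))) ((α * star β + star α * β).re) 0 ∧
    HasDerivAt (fun t : ℝ => IwaA (g * Ac t)) (Complex.normSq α - Complex.normSq β) 0 := by
  subst hg
  set nα := Complex.normSq α with hnα
  set nβ := Complex.normSq β with hnβ
  -- the expression inside the log
  set E : ℂ → ℝ → ℝ := fun z t => nα + nβ * (Complex.normSq z + Real.exp (2*t))
    - (α * star β * z + star α * β * star z).re with hE
  have hns : ∀ z : ℂ, Complex.normSq ((-star β) * z + star α)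
      = nα + nβ * Complex.normSq z - (α * star β * z + star α * β * star z).re := by
    intro z
    simp only [hnα, hnβ, Complex.normSq_apply, Complex.add_re, Complex.add_im,
      Complex.mul_re, Complex.mul_im, Complex.neg_re, Complex.neg_im,
      Complex.star_def, Complex.conj_re, Complex.conj_im]
    ring
  have hEexpr : ∀ z t, E z t = nβ * Real.exp (2*t) + Complex.normSq ((-star β) * z + star α) := by
    intro z t
    rw [hns]
    simp only [hE]
    ring
  have hEpos : ∀ z t, 0 < E z t := by
    intro z t
    rw [hEexpr]
    rcases eq_or_ne β 0 with hb | hb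
    · have : Complex.normSq ((-star β) * z + star α) = nα := by
        simp [hb, hnα]
      rw [this]
      have : nα = 1 := by simp [hb, hnβ] at hαβ; linarith [hαβ]
      simp [hb, hnβ, this]
    · have h1 : 0 < nβ := by
        rw [hnβ]; exact Complex.normSq_pos.mpr hb
      have h2 : 0 ≤ Complex.normSq ((-star β) * z + star α) := Complex.normSq_nonneg _
      have := Real.exp_pos (2*t)
      nlinarith
  have main : ∀ z : ℂ, ∀ t : ℝ,
      IwaA (Nc z₀ * Ac t₀ * !![α, β; -star β, star α] * Nc z * Ac t) = t₀ + t - Real.log (E z t) := by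
    intro z t
    have hc : (Nc z₀ * Ac t₀ * !![α, β; -star β, star α] * Nc z * Ac t) 1 0
        = (Real.exp (-(t₀/2)) : ℂ) * (-star β) * Real.exp (t/2) := by
      simp [Nc, Ac, Matrix.mul_apply, Fin.sum_univ_two]
    have hd : (Nc z₀ * Ac t₀ * !![α, β; -star β, star α] * Nc z * Ac t) 1 1
        = (Real.exp (-(t₀/2)) : ℂ) * ((-star β) * z + star α) * Real.exp (-(t/2)) := by
      simp [Nc, Ac, Matrix.mul_apply, Fin.sum_univ_two]
      ring
    have h1 : Real.exp (-(t₀/2)) * Real.exp (-(t₀/2)) * (Real.exp (-(t/2)) * Real.exp (-(t/2)))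
        = Real.exp (-(t₀+t)) := by
      rw [← Real.exp_add, ← Real.exp_add, ← Real.exp_add]; ring_nf
    have h2 : Real.exp (-(t₀/2)) * Real.exp (-(t₀/2)) * (Real.exp (t/2) * Real.exp (t/2))
        = Real.exp (-(t₀+t)) * Real.exp (2*t) := by
      rw [← Real.exp_add, ← Real.exp_add, ← Real.exp_add, ← Real.exp_add]; ring_nf
    have key : Complex.normSq ((Nc z₀ * Ac t₀ * !![α, β; -star β, star α] * Nc z * Ac t) 1 0)
        + Complex.normSq ((Nc z₀ * Ac t₀ * !![α, β; -star β, star α] * Nc z * Ac t) 1 1)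
        = Real.exp (-(t₀+t)) * E z t := by
      rw [hc, hd, hEexpr z t]
      simp only [Complex.star_def, Complex.normSq_mul, Complex.normSq_ofReal,
        Complex.normSq_neg, Complex.normSq_conj]
      linear_combination Complex.normSq β * h2
        + Complex.normSq (-(starRingEnd ℂ) β * z + (starRingEnd ℂ) α) * h1
    rw [IwaA, key, Real.log_mul (Real.exp_ne_zero _) (ne_of_gt (hEpos z t)), Real.log_exp]
    ring
  refine ⟨main, ?_, ?_⟩
  · -- derivative in x
    set s : ℝ := (α * star β + star α * β).re with hs
    have hAc0 : Ac 0 = 1 := by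
      rw [Ac, Matrix.one_fin_two]
      norm_num
    have hfun : ∀ x : ℝ, IwaA (Nc z₀ * Ac t₀ * !![α, β; -star β, star α] * Nc (x : ℂ))
        = t₀ - Real.log (1 - s*x + nβ * x^2) := by
      intro x
      have := main (x : ℂ) 0
      rw [hAc0, mul_one] at this
      rw [this]
      have harg : E (x : ℂ) 0 = 1 - s*x + nβ * x^2 := by
        simp only [hE, hs, Complex.normSq_ofReal, mul_zero, Real.exp_zero,
          Complex.star_def, Complex.conj_ofReal, Complex.add_re, Complex.mul_re,
          Complex.ofReal_re, Complex.ofReal_im]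
        nlinarith [hαβ]
      rw [harg]
      ring
    have heq : (fun x : ℝ => IwaA (Nc z₀ * Ac t₀ * !![α, β; -star β, star α] * Nc (x : ℂ)))
        = fun x : ℝ => t₀ - Real.log (1 - s*x + nβ * x^2) := funext hfun
    rw [heq]
    have hp : HasDerivAt (fun x : ℝ => 1 - s*x + nβ * x^2) (-s) 0 := by
      have h1 : HasDerivAt (fun x : ℝ => 1 - s*x + nβ * x^2)
          (0 - s*1 + nβ * (2 * 0^1)) 0 := by
        exact ((hasDerivAt_const 0 (1:ℝ)).sub ((hasDerivAt_id 0).const_mul s)).add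
          ((hasDerivAt_pow 2 0).const_mul nβ)
      simpa using h1
    have hlog : HasDerivAt (fun x : ℝ => Real.log (1 - s*x + nβ * x^2))
        (-s / (1 - s*0 + nβ * 0^2)) 0 := hp.log (by norm_num)
    have := (hasDerivAt_const (0:ℝ) t₀).sub hlog
    simpa [hs, Pi.sub_def] using this
  · -- derivative in t
    have hNc0 : Nc 0 = 1 := by
      rw [Nc, Matrix.one_fin_two]
    have hfun : ∀ t : ℝ, IwaA (Nc z₀ * Ac t₀ * !![α, β; -star β, star α] * Ac t)
        = t₀ + t - Real.log (nα + nβ * Real.exp (2*t)) := by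
      intro t
      have := main 0 t
      rw [hNc0, mul_one] at this
      rw [this]
      have harg : E 0 t = nα + nβ * Real.exp (2*t) := by
        simp [hE]
      rw [harg]
    have heq : (fun t : ℝ => IwaA (Nc z₀ * Ac t₀ * !![α, β; -star β, star α] * Ac t))
        = fun t : ℝ => t₀ + t - Real.log (nα + nβ * Real.exp (2*t)) := funext hfun
    rw [heq]
    have hq : HasDerivAt (fun t : ℝ => nα + nβ * Real.exp (2*t)) (2*nβ) 0 := by
      have h1 : HasDerivAt (fun t : ℝ => Real.exp (2*t)) (Real.exp (2*(0:ℝ)) * (2*1)) 0 :=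
        ((hasDerivAt_id (0:ℝ)).const_mul 2).exp
      have h2 := (h1.const_mul nβ).const_add nα
      simpa [mul_comm] using h2
    have hq0 : nα + nβ * Real.exp (2*0) = 1 := by
      simp [hαβ]
    have hlog : HasDerivAt (fun t : ℝ => Real.log (nα + nβ * Real.exp (2*t)))
        (2*nβ / (nα + nβ * Real.exp (2*0))) 0 := hq.log (by rw [hq0]; norm_num)
    have hfinal := ((hasDerivAt_const (0:ℝ) t₀).add (hasDerivAt_id 0)).sub hlog
    have : (0 + 1) - 2*nβ / (nα + nβ * Real.exp (2*0)) = nα - nβ := by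
      rw [hq0]
      field_simp
      linarith [hαβ]
    rw [this] at hfinal
    exact hfinal
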